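/- In the dynamic network creation game in which players' communication cost uses the temporal shortest distance, for every real atomic cost α ≥ 2 and every integer n ≥ 4, the strategy profile on players v₀, v₁, …, v_{n−1} defined by s(v₀) = ∅, s(v₁) = {(v₂, n−2), (v₀, 2n−4)}, s(v₂) = {(v₃, n−1)}, s(vᵢ) = {(v_{i+1}, n−3+i), (v₀, n−i)} for 3 ≤ i ≤ n−2, and s(v_{n−1}) = {(v₀, 1)}, whose communication temporal graph is the labelled diminished fan dF_{n−1}, has social cost at least α(2n−4) + (n−2)³/6. -/

import Mathlib

open scoped ENNReal BigOperators

/-- A temporal path from `u` to `v`, given as a list of steps `(next vertex, time label)`.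
The labelling `lab` gives, for each (ordered) pair of vertices, the set of time labels of the
edge joining them (empty if there is no edge); it is symmetric for temporal graphs arising
from strategy profiles.  The conditions say that consecutive steps use time labels belonging
to the corresponding edge, that time labels strictly increase along the path, that no vertex is
repeated, and that the path ends at `v`. -/
def IsTemporalPath {V : Type*} (lab : V → V → Set ℕ) (u v : V) (p : List (V × ℕ)) : Prop :=
  List.Chain (fun a b => b.2 ∈ lab a.1 b.1) (u, 0) p ∧
  List.Chain' (· < ·) (p.map Prod.snd) ∧
  (u :: p.map Prod.fst).Nodup ∧
  (u :: p.map Prod.fst).getLast (List.cons_ne_nil _ _) = v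

/-- The temporal shortest distance from `u` to `v`: the least number of edges of a temporal
path from `u` to `v` (`0` if `u = v`, `⊤` if there is no temporal path). -/
noncomputable def temporalDist {V : Type*} (lab : V → V → Set ℕ) (u v : V) : ℕ∞ :=
  sInf {n : ℕ∞ | ∃ p : List (V × ℕ), IsTemporalPath lab u v p ∧ (p.length : ℕ∞) = n}

/-- The labelling of the communication temporal graph `𝒢[s]` of a strategy profile `s`:
`t` is a label of the edge `uv` iff `(u, t) ∈ s v` or `(v, t) ∈ s u`. -/
def profLab {V : Type*} (s : V → Finset (V × ℕ)) : V → V → Set ℕ :=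
  fun u v => {t | (u, t) ∈ s v ∨ (v, t) ∈ s u}

/-- The (finite) set of time labels of the edge `uv` in the communication temporal graph. -/
def labelFinset {V : Type*} [DecidableEq V] (s : V → Finset (V × ℕ)) (u v : V) : Finset ℕ :=
  (((s v).filter (fun p => p.1 = u)).image Prod.snd) ∪
    (((s u).filter (fun p => p.1 = v)).image Prod.snd)

/-- The total number of time labels `∑ e ∈ E, |λ(e)|` of the communication temporal graph
(each unordered pair is counted once, whence the division by `2`). -/
def numLabels {V : Type*} [Fintype V] [DecidableEq V] (s : V → Finset (V × ℕ)) : ℕ :=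
  (∑ u : V, ∑ v : V, if u = v then 0 else (labelFinset s u v).card) / 2

/-- The number of edges `|E|` of the communication temporal graph. -/
def numEdges {V : Type*} [Fintype V] [DecidableEq V] (s : V → Finset (V × ℕ)) : ℕ :=
  ((Finset.univ : Finset (V × V)).filter
    (fun q => q.1 ≠ q.2 ∧ (labelFinset s q.1 q.2).Nonempty)).card / 2

/-- The social cost `c[s] = α·∑_{e ∈ E} |λ(e)| + ∑_{(u,v) ∈ V×V} d_{𝒢[s]}(u,v)`
of a strategy profile `s` for atomic cost `α`. -/
noncomputable def socialCost {V : Type*} [Fintype V] [DecidableEq V]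
    (α : ℝ) (s : V → Finset (V × ℕ)) : ℝ≥0∞ :=
  ENNReal.ofReal α * (numLabels s : ℝ≥0∞) +
    ∑ u : V, ∑ v : V, (temporalDist (profLab s) u v : ℝ≥0∞)

/-- The individual cost `c[s](v) = α·|s(v)| + ∑_{w ∈ V} d_{𝒢[s]}(v,w)` of player `v`. -/
noncomputable def indivCost {V : Type*} [Fintype V]
    (α : ℝ) (s : V → Finset (V × ℕ)) (v : V) : ℝ≥0∞ :=
  ENNReal.ofReal α * ((s v).card : ℝ≥0∞) +
    ∑ w : V, (temporalDist (profLab s) v w : ℝ≥0∞)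

/-- A strategy profile is a Nash equilibrium if no player can strictly decrease its individual
cost by changing only its own strategy. -/
def IsNash {V : Type*} [Fintype V] [DecidableEq V] (α : ℝ) (s : V → Finset (V × ℕ)) : Prop :=
  ∀ (v : V) (t : Finset (V × ℕ)),
    ¬ indivCost α (Function.update s v t) v < indivCost α s v

/-- The optimal social cost `c*(α, n)`: the minimum social cost over all strategy profiles
with `n` players and atomic cost `α`. -/
noncomputable def optCost (α : ℝ) (n : ℕ) : ℝ≥0∞ :=
  ⨅ s : Fin n → Finset (Fin n × ℕ), socialCost α s

/-- The price of anarchy `PoA(α, n)`: the maximum social cost of a Nash equilibrium with `n`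
players and atomic cost `α`, divided by the optimal social cost `c*(α, n)`. -/
noncomputable def PoA (α : ℝ) (n : ℕ) : ℝ≥0∞ :=
  (⨆ s : {s : Fin n → Finset (Fin n × ℕ) // IsNash α s}, socialCost α s.1) / optCost α n

/-- The price of stability `PoS(α, n)`: the minimum social cost of a Nash equilibrium with `n`
players and atomic cost `α`, divided by the optimal social cost `c*(α, n)`. -/
noncomputable def PoS (α : ℝ) (n : ℕ) : ℝ≥0∞ :=
  (⨅ s : {s : Fin n → Finset (Fin n × ℕ) // IsNash α s}, socialCost α s.1) / optCost α n

/-- The labelling of the diminished fan `dF_{n-1}` on vertices `v₀, v₁, …, v_{n-1}`: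
the path edges `vᵢ v_{i+1}` (for `1 ≤ i ≤ n-2`) carry the single time label `n-3+i`, the
edge `v₀ v₁` carries the single time label `2n-4`, and the spoke edges `v₀ vᵢ`
(for `3 ≤ i ≤ n-1`) carry the single time label `n-i`. -/
def dfLab (n : ℕ) : Fin n → Fin n → Set ℕ := fun u v =>
  {t | (∃ i : ℕ, 1 ≤ i ∧ i ≤ n - 2 ∧
          (((u : ℕ) = i ∧ (v : ℕ) = i + 1) ∨ ((v : ℕ) = i ∧ (u : ℕ) = i + 1)) ∧
          t = n - 3 + i) ∨
       ((((u : ℕ) = 0 ∧ (v : ℕ) = 1) ∨ ((v : ℕ) = 0 ∧ (u : ℕ) = 1)) ∧ t = 2 * n - 4) ∨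
       (∃ i : ℕ, 3 ≤ i ∧ i ≤ n - 1 ∧
          (((u : ℕ) = 0 ∧ (v : ℕ) = i) ∨ ((v : ℕ) = 0 ∧ (u : ℕ) = i)) ∧
          t = n - i)}

/-- The strategy profile realizing the labelled diminished fan `dF_{n-1}`:
`s(v₀) = ∅`, `s(v₁) = {(v₂, n-2), (v₀, 2n-4)}`, `s(v₂) = {(v₃, n-1)}`,
`s(vᵢ) = {(v_{i+1}, n-3+i), (v₀, n-i)}` for `3 ≤ i ≤ n-2`, and `s(v_{n-1}) = {(v₀, 1)}`. -/
def sDF (n : ℕ) (hn : 4 ≤ n) : Fin n → Finset (Fin n × ℕ) := fun u =>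
  if (u : ℕ) = 0 then ∅
  else if (u : ℕ) = 1 then {(⟨2, by omega⟩, n - 2), (⟨0, by omega⟩, 2 * n - 4)}
  else if (u : ℕ) = 2 then {(⟨3, by omega⟩, n - 1)}
  else if h : (u : ℕ) = n - 1 then {(⟨0, by omega⟩, 1)}
  else {(⟨(u : ℕ) + 1, by have := u.isLt; omega⟩, n - 3 + (u : ℕ)), (⟨0, by omega⟩, n - (u : ℕ))}

/-!
No edge of `dF_{n-1}` is bought from both of its ends, so the number of time labels equals the
total size `∑ |s(v)| = 2n - 4` of the strategies.

For the distances, give the state "at `vᵢ` at time `t`" the potential `i` if `i ≥ 1` and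
`n - t` if `i = 0`. A spoke `v₀ vᵢ` carries the label `n - i`: entering `v₀` through it yields
potential `i`, and leaving `v₀` through it is only possible from potential at least `i`. So every
step of a temporal path raises the potential by at most one, whence `d(vᵤ, v_w) ≥ w - u` for
`u ≥ 1`. Summing gives `∑ d ≥ C(n, 3) ≥ (n - 2)³ / 6`.
-/

theorem List.IsChain.apply_getLast_le_add_length {α : Type*} {R : α → α → Prop} {φ : α → ℕ}
    (hφ : ∀ a b, R a b → φ b ≤ φ a + 1) :
    ∀ {a : α} {l : List α}, IsChain R (a :: l) →
      φ ((a :: l).getLast (cons_ne_nil a l)) ≤ φ a + l.length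
  | _, [], _ => by simp
  | a, b :: l, h => by
    rw [isChain_cons_cons] at h
    have ih := apply_getLast_le_add_length hφ h.2
    have hab := hφ a b h.1
    rw [getLast_cons_cons, length_cons]
    omega

theorem le_temporalDist {V : Type*} {lab : V → V → Set ℕ} {u v : V} {k : ℕ}
    (h : ∀ p, IsTemporalPath lab u v p → k ≤ p.length) : (k : ℕ∞) ≤ temporalDist lab u v :=
  le_sInf fun _ ⟨p, hp, hlen⟩ => hlen ▸ Nat.cast_le.2 (h p hp)

theorem IsTemporalPath.exists_potential_le_add_length {V : Type*} {lab : V → V → Set ℕ} {u v : V}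
    {p : List (V × ℕ)} {φ : V × ℕ → ℕ}
    (hφ : ∀ a b : V × ℕ, b.2 ∈ lab a.1 b.1 → a.2 ≤ b.2 → φ b ≤ φ a + 1)
    (hp : IsTemporalPath lab u v p) : ∃ t, φ (v, t) ≤ φ (u, 0) + p.length := by
  obtain ⟨hlab, hinc, -, hlast⟩ := hp
  have hmono : List.IsChain (fun a b : V × ℕ => a.2 ≤ b.2) ((u, 0) :: p) := by
    refine List.isChain_cons.2 ⟨fun _ _ => Nat.zero_le _, ?_⟩
    exact ((List.isChain_map Prod.snd).1 hinc).imp fun _ _ => le_of_lt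
  have hchain : List.IsChain (fun a b : V × ℕ => b.2 ∈ lab a.1 b.1 ∧ a.2 ≤ b.2) ((u, 0) :: p) :=
    List.isChain_iff_getElem.2 fun i hi =>
      ⟨List.isChain_iff_getElem.1 hlab i hi, List.isChain_iff_getElem.1 hmono i hi⟩
  refine ⟨(((u, 0) :: p).getLast (List.cons_ne_nil _ _)).2, ?_⟩
  have hv : (((u, 0) :: p).getLast (List.cons_ne_nil _ _)).1 = v := by
    rw [← hlast, ← List.getLast_map (f := Prod.fst) (by simp)]
    rfl
  simpa only [← hv] using hchain.apply_getLast_le_add_length fun a b h => hφ a b h.1 h.2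

theorem card_labelFinset {V : Type*} [DecidableEq V] (s : V → Finset (V × ℕ))
    (hs : ∀ u v t t', (u, t) ∈ s v → (v, t') ∉ s u) (u v : V) :
    (labelFinset s u v).card = ((s v).filter (·.1 = u)).card + ((s u).filter (·.1 = v)).card := by
  have hinj : ∀ w z, Set.InjOn Prod.snd (((s z).filter (·.1 = w) : Finset (V × ℕ)) : Set (V × ℕ)) :=
    fun w z x hx y hy hxy =>
      Prod.ext ((Finset.mem_filter.1 hx).2.trans (Finset.mem_filter.1 hy).2.symm) hxy
  rw [labelFinset, Finset.card_union_of_disjoint, Finset.card_image_of_injOn (hinj _ _),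
    Finset.card_image_of_injOn (hinj _ _)]
  simp only [Finset.disjoint_left, Finset.mem_image, Finset.mem_filter]
  rintro t ⟨x, ⟨hx, rfl⟩, rfl⟩ ⟨y, ⟨hy, rfl⟩, hyt⟩
  exact hs x.1 y.1 x.2 y.2 hx hy

theorem numLabels_eq_sum_card {V : Type*} [Fintype V] [DecidableEq V]
    (s : V → Finset (V × ℕ)) (hs : ∀ u v t t', (u, t) ∈ s v → (v, t') ∉ s u) :
    numLabels s = ∑ v, (s v).card := by
  have hpair : ∀ u v, (if u = v then 0 else (labelFinset s u v).card) =
      ((s v).filter (·.1 = u)).card + ((s u).filter (·.1 = v)).card := by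
    intro u v
    split_ifs with huv
    · subst huv
      have hempty : (s u).filter (·.1 = u) = ∅ :=
        Finset.filter_eq_empty_iff.2 fun x hx hxu => hs u u x.2 x.2 (hxu ▸ hx) (hxu ▸ hx)
      rw [hempty, Finset.card_empty]
    · exact card_labelFinset s hs u v
  have hfiber : ∀ v, ∑ u, ((s v).filter (·.1 = u)).card = (s v).card := fun v =>
    (Finset.card_eq_sum_card_fiberwise fun x _ => Finset.mem_coe.2 (Finset.mem_univ x.1)).symm
  rw [numLabels, Finset.sum_congr rfl fun u _ => Finset.sum_congr rfl fun v _ => hpair u v]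
  simp only [Finset.sum_add_distrib]
  rw [Finset.sum_comm]
  simp only [hfiber]
  omega

theorem sum_range_sum_range_ite_sub_eq_choose (n : ℕ) :
    ∑ i ∈ Finset.range n, ∑ j ∈ Finset.range n, (if i = 0 then 0 else j - i) = n.choose 3 := by
  induction n with
  | zero => rfl
  | succ n ih =>
    have hcol : ∑ i ∈ Finset.range (n + 1), (if i = 0 then 0 else n - i) = n.choose 2 := by
      simp only [Finset.sum_range_succ', Nat.add_one_ne_zero, if_false, if_true, add_zero]
      rw [Nat.choose_two_right, ← Finset.sum_range_id, ← Finset.sum_range_reflect]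
      exact Finset.sum_congr rfl fun j hj => by rw [Finset.mem_range] at hj; omega
    have hrow : ∑ j ∈ Finset.range n, (if n = 0 then 0 else j - n) = 0 :=
      Finset.sum_eq_zero fun j hj => by rw [Finset.mem_range] at hj; split_ifs <;> omega
    rw [Finset.sum_congr rfl fun i _ => Finset.sum_range_succ _ n, Finset.sum_add_distrib, hcol,
      Finset.sum_range_succ, hrow, ih, Nat.choose_succ_succ' n 2, add_zero]
    exact add_comm _ _

theorem cube_sub_two_div_six_le_choose_three {n : ℕ} (hn : 2 ≤ n) :
    ((n : ℝ) - 2) ^ 3 / 6 ≤ n.choose 3 := by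
  have h := Nat.descFactorial_eq_factorial_mul_choose n 3
  simp only [Nat.descFactorial, Nat.factorial, Nat.sub_zero, mul_one] at h
  have hr : ((n.choose 3 : ℕ) : ℝ) * 6 = n * (n - 1) * (n - 2) := by
    have := congrArg (Nat.cast : ℕ → ℝ) h
    push_cast [Nat.cast_sub (by omega : 1 ≤ n), Nat.cast_sub hn] at this
    linarith
  have hn' : (2 : ℝ) ≤ n := by exact_mod_cast hn
  nlinarith [mul_nonneg (sub_nonneg.2 hn') (sub_nonneg.2 hn')]

theorem mem_sDF_iff {n : ℕ} (hn : 4 ≤ n) (w z : Fin n) (t : ℕ) :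
    (w, t) ∈ sDF n hn z ↔ 1 ≤ (z : ℕ) ∧
      ((w : ℕ) = z + 1 ∧ (z : ℕ) ≤ n - 2 ∧ t = n - 3 + z ∨
        (w : ℕ) = 0 ∧ ((z : ℕ) = 1 ∧ t = 2 * n - 4 ∨ 3 ≤ (z : ℕ) ∧ t = n - z)) := by
  have hz := z.isLt
  unfold sDF
  split_ifs <;> simp only [Finset.mem_insert, Finset.mem_singleton, Finset.notMem_empty,
    Prod.mk.injEq, Fin.ext_iff, false_iff, not_and] <;> omega

theorem profLab_sDF (n : ℕ) (hn : 4 ≤ n) : profLab (sDF n hn) = dfLab n := by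
  ext u v t
  have hun := u.isLt
  have hvn := v.isLt
  simp only [profLab, dfLab, Set.mem_ofPred_eq, mem_sDF_iff]
  constructor
  · rintro (⟨hv1, ⟨hu, hv, ht⟩ | ⟨hu, ⟨hv, ht⟩ | ⟨hv, ht⟩⟩⟩ |
      ⟨hu1, ⟨hv, hu, ht⟩ | ⟨hv, ⟨hu, ht⟩ | ⟨hu, ht⟩⟩⟩)
    · exact .inl ⟨v, by omega, hv, .inr ⟨rfl, hu⟩, ht⟩
    · exact .inr (.inl ⟨.inl ⟨hu, hv⟩, ht⟩)
    · exact .inr (.inr ⟨v, hv, by omega, .inl ⟨hu, rfl⟩, ht⟩)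
    · exact .inl ⟨u, by omega, hu, .inl ⟨rfl, hv⟩, ht⟩
    · exact .inr (.inl ⟨.inr ⟨hv, hu⟩, ht⟩)
    · exact .inr (.inr ⟨u, hu, by omega, .inr ⟨hv, rfl⟩, ht⟩)
  · rintro (⟨i, hi, hi', ⟨hu, hv⟩ | ⟨hv, hu⟩, ht⟩ | ⟨⟨hu, hv⟩ | ⟨hv, hu⟩, ht⟩ |
      ⟨i, hi, hi', ⟨hu, hv⟩ | ⟨hv, hu⟩, ht⟩)
    · exact .inr ⟨by omega, .inl ⟨by omega, by omega, by omega⟩⟩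
    · exact .inl ⟨by omega, .inl ⟨by omega, by omega, by omega⟩⟩
    · exact .inl ⟨by omega, .inr ⟨hu, .inl ⟨hv, ht⟩⟩⟩
    · exact .inr ⟨by omega, .inr ⟨hv, .inl ⟨hu, ht⟩⟩⟩
    · exact .inl ⟨by omega, .inr ⟨hu, .inr ⟨by omega, by omega⟩⟩⟩
    · exact .inr ⟨by omega, .inr ⟨hv, .inr ⟨by omega, by omega⟩⟩⟩

theorem notMem_sDF_of_mem_sDF {n : ℕ} (hn : 4 ≤ n) (u v : Fin n) (t t' : ℕ)
    (h : (u, t) ∈ sDF n hn v) : (v, t') ∉ sDF n hn u := by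
  rw [mem_sDF_iff] at h ⊢
  omega

theorem card_sDF_add {n : ℕ} (hn : 4 ≤ n) (z : Fin n) :
    (sDF n hn z).card + (if (z : ℕ) = 0 then 2 else 0) + (if (z : ℕ) = 2 then 1 else 0) +
      (if (z : ℕ) = n - 1 then 1 else 0) = 2 := by
  unfold sDF
  split_ifs <;> simp only [Finset.card_empty, Finset.card_singleton, Finset.mem_singleton,
    Finset.card_insert_of_notMem, Prod.ext_iff, Fin.ext_iff, OfNat.ofNat_ne_zero,
    Nat.add_eq_zero_iff, one_ne_zero, and_false, false_and, not_false_eq_true] <;> omega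

theorem sum_card_sDF {n : ℕ} (hn : 4 ≤ n) : ∑ z, (sDF n hn z).card = 2 * n - 4 := by
  have h := Finset.sum_congr rfl fun z (_ : z ∈ Finset.univ) => card_sDF_add hn z
  simp only [Finset.sum_add_distrib, Finset.sum_const, Finset.card_univ, Fintype.card_fin,
    smul_eq_mul] at h
  rw [Fin.sum_univ_eq_sum_range (fun i => if i = 0 then 2 else 0),
    Fin.sum_univ_eq_sum_range (fun i => if i = 2 then 1 else 0),
    Fin.sum_univ_eq_sum_range (fun i => if i = n - 1 then 1 else 0)] at h
  simp only [Finset.sum_ite_eq', Finset.mem_range] at h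
  split_ifs at h <;> omega

def dfPotential (n : ℕ) (x : Fin n × ℕ) : ℕ := if (x.1 : ℕ) = 0 then n - x.2 else x.1

theorem dfPotential_le_add_one {n : ℕ} (a b : Fin n × ℕ) (hab : b.2 ∈ dfLab n a.1 b.1)
    (hle : a.2 ≤ b.2) : dfPotential n b ≤ dfPotential n a + 1 := by
  have ha := a.1.isLt
  simp only [dfLab, Set.mem_ofPred_eq] at hab
  unfold dfPotential
  rcases hab with ⟨i, hi, hi', ⟨hu, hv⟩ | ⟨hv, hu⟩, ht⟩ | ⟨⟨hu, hv⟩ | ⟨hv, hu⟩, ht⟩ |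
      ⟨i, hi, hi', ⟨hu, hv⟩ | ⟨hv, hu⟩, ht⟩ <;> split_ifs <;> omega

theorem sub_le_temporalDist_dfLab {n : ℕ} {u : Fin n} (hu : (u : ℕ) ≠ 0) (v : Fin n) :
    (((v : ℕ) - u : ℕ) : ℕ∞) ≤ temporalDist (dfLab n) u v := by
  refine le_temporalDist fun p hp => ?_
  obtain ⟨t, ht⟩ := hp.exists_potential_le_add_length dfPotential_le_add_one
  simp only [dfPotential] at ht
  split_ifs at ht <;> omega

theorem choose_three_le_sum_temporalDist_dfLab (n : ℕ) :
    (n.choose 3 : ℝ≥0∞) ≤ ∑ u : Fin n, ∑ v : Fin n, (temporalDist (dfLab n) u v : ℝ≥0∞) := by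
  rw [← sum_range_sum_range_ite_sub_eq_choose, ← Fin.sum_univ_eq_sum_range]
  simp only [← Fin.sum_univ_eq_sum_range (fun j => if _ = 0 then 0 else j - _), Nat.cast_sum]
  refine Finset.sum_le_sum fun u _ => Finset.sum_le_sum fun v _ => ?_
  split_ifs with hu
  · exact (Nat.cast_zero).trans_le bot_le
  · rw [← ENat.toENNReal_coe]
    exact ENat.toENNReal_le.2 (sub_le_temporalDist_dfLab hu v)

theorem statement_18_general (α : ℝ) (n : ℕ) (hn : 4 ≤ n) :
    (∀ u v : Fin n, profLab (sDF n hn) u v = dfLab n u v) ∧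
      ENNReal.ofReal (α * (2 * (n : ℝ) - 4) + ((n : ℝ) - 2) ^ 3 / 6) ≤
        socialCost α (sDF n hn) := by
  refine ⟨fun u v => by rw [profLab_sDF], ?_⟩
  have hlabels : numLabels (sDF n hn) = 2 * n - 4 :=
    (numLabels_eq_sum_card _ (notMem_sDF_of_mem_sDF hn)).trans (sum_card_sDF hn)
  have hcast : ((2 * n - 4 : ℕ) : ℝ) = 2 * n - 4 := by
    rw [Nat.cast_sub (by omega)]
    push_cast
    ring
  rw [socialCost, hlabels, profLab_sDF]
  calc _ ≤ ENNReal.ofReal (α * (2 * n - 4)) + ENNReal.ofReal (((n : ℝ) - 2) ^ 3 / 6) :=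
        ENNReal.ofReal_add_le
    _ ≤ _ := by
      gcongr
      · rw [ENNReal.ofReal_mul' (by linarith), ← hcast, ENNReal.ofReal_natCast]
      · calc _ ≤ ENNReal.ofReal (n.choose 3) :=
              ENNReal.ofReal_le_ofReal (cube_sub_two_div_six_le_choose_three (by omega))
          _ ≤ _ := by
            rw [ENNReal.ofReal_natCast]
            exact choose_three_le_sum_temporalDist_dfLab n

/-- For every atomic cost `α ≥ 2` and every integer `n ≥ 4`, the strategy profile `sDF n`,
whose communication temporal graph is the labelled diminished fan `dF_{n-1}`, has social
cost at least `α(2n-4) + (n-2)³/6`. -/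
theorem statement_18 (α : ℝ) (hα : 2 ≤ α) (n : ℕ) (hn : 4 ≤ n) :
    (∀ u v : Fin n, profLab (sDF n hn) u v = dfLab n u v) ∧
      ENNReal.ofReal (α * (2 * (n : ℝ) - 4) + ((n : ℝ) - 2) ^ 3 / 6) ≤
        socialCost α (sDF n hn) :=
  statement_18_general α n hn
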